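/- arXiv:2012.12656 — 2 statements merged into one kernel-verified Lean document; each statement's English description precedes it below -/
import Mathlib

section
/- Let 0 < r1 ≤ r2 < ∞ and let f be a nonzero analytic function on A[r1,r2]. Then for all r, R with r1 ≤ r < R ≤ r2 one has k_f(r) ≤ K_f(r) ≤ k_f(R) ≤ K_f(R); in particular the function t ↦ K_f(t) is nondecreasing on [r1,r2]. -/
/-!
If `|a_n| r^n` is a maximal term at radius `r` and `|a_m| R^m` one at radius `R > r`, then
`|a_n| R^n ≤ |a_m| R^m` and `|a_m| r^m ≤ |a_n| r^n`; dividing the two gives `(R/r)^n ≤ (R/r)^m`,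
hence `n ≤ m`. Applied to `n = K_f(r)` and `m = k_f(R)` this is the middle inequality, and the
outer ones hold because a least element lies below a greatest one.
-/

open Filter Set

/-- `a` is the coefficient family of a Laurent series defining an analytic function on the
closed annulus `A[r1,r2]`. -/
def IsLaurentOn {F : Type*} [NontriviallyNormedField F] (a : ℤ → F) (r1 r2 : ℝ) : Prop :=
  ∀ r : ℝ, r1 ≤ r → r ≤ r2 → Tendsto (fun n : ℤ => ‖a n‖ * r ^ n) cofinite (nhds 0)

/-- The Gauss norm `|f|_r = sup_{n ∈ ℤ} |a_n| r^n`. -/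
noncomputable def gaussNorm {F : Type*} [NontriviallyNormedField F] (a : ℤ → F) (r : ℝ) : ℝ :=
  sSup (Set.range fun n : ℤ => ‖a n‖ * r ^ n)

theorem le_of_mul_zpow_le_of_mul_zpow_le {x y r R : ℝ} {n m : ℤ} (hx : 0 < x) (hy : 0 < y)
    (hr : 0 < r) (hrR : r < R) (hR_le : y * R ^ n ≤ x * R ^ m) (hr_le : x * r ^ m ≤ y * r ^ n) :
    n ≤ m := by
  have hR : 0 < R := hr.trans hrR
  have hprod : (x * y) * (R ^ n * r ^ m) ≤ (x * y) * (R ^ m * r ^ n) := by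
    have := mul_le_mul hR_le hr_le (by positivity) (by positivity)
    linarith
  have hcross : R ^ n * r ^ m ≤ R ^ m * r ^ n := le_of_mul_le_mul_left hprod (mul_pos hx hy)
  have hratio : (R / r) ^ n ≤ (R / r) ^ m := by
    rw [div_zpow, div_zpow, div_le_div_iff₀ (zpow_pos hr n) (zpow_pos hr m)]
    linarith
  exact (zpow_le_zpow_iff_right₀ ((one_lt_div hr).mpr hrR)).mp hratio

section GaussNorm

variable {F : Type*} [NontriviallyNormedField F] {a : ℤ → F} {r R : ℝ}

theorem norm_mul_zpow_le_gaussNorm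
    (ha : Tendsto (fun n : ℤ => ‖a n‖ * r ^ n) cofinite (nhds 0)) (n : ℤ) :
    ‖a n‖ * r ^ n ≤ gaussNorm a r :=
  le_csSup ha.bddAbove_range_of_cofinite (mem_range_self n)

theorem norm_pos_of_eq_gaussNorm (hr : 0 < r) (hne : ∃ n : ℤ, a n ≠ 0)
    (ha : Tendsto (fun n : ℤ => ‖a n‖ * r ^ n) cofinite (nhds 0)) {n : ℤ}
    (hn : ‖a n‖ * r ^ n = gaussNorm a r) : 0 < ‖a n‖ := by
  obtain ⟨m, hm⟩ := hne
  have hpos : 0 < ‖a m‖ * r ^ m := mul_pos (norm_pos_iff.mpr hm) (zpow_pos hr m)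
  have : 0 < ‖a n‖ * r ^ n := hn ▸ hpos.trans_le (norm_mul_zpow_le_gaussNorm ha m)
  exact pos_of_mul_pos_left this (zpow_pos hr n).le

theorem le_of_eq_gaussNorm_of_lt (hr : 0 < r) (hrR : r < R) (hne : ∃ n : ℤ, a n ≠ 0)
    (har : Tendsto (fun n : ℤ => ‖a n‖ * r ^ n) cofinite (nhds 0))
    (haR : Tendsto (fun n : ℤ => ‖a n‖ * R ^ n) cofinite (nhds 0)) {n m : ℤ}
    (hn : ‖a n‖ * r ^ n = gaussNorm a r) (hm : ‖a m‖ * R ^ m = gaussNorm a R) : n ≤ m :=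
  le_of_mul_zpow_le_of_mul_zpow_le (norm_pos_of_eq_gaussNorm (hr.trans hrR) hne haR hm)
    (norm_pos_of_eq_gaussNorm hr hne har hn) hr hrR
    (hm ▸ norm_mul_zpow_le_gaussNorm haR n) (hn ▸ norm_mul_zpow_le_gaussNorm har m)

end GaussNorm

theorem statement6_general {F : Type*} [NontriviallyNormedField F]
    (r1 r2 : ℝ) (h1 : 0 < r1)
    (a : ℤ → F) (ha : IsLaurentOn a r1 r2) (hne : ∃ n : ℤ, a n ≠ 0)
    (kf Kf : ℝ → ℤ)
    (hk : ∀ r : ℝ, r1 ≤ r → r ≤ r2 →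
      IsLeast {n : ℤ | ‖a n‖ * r ^ n = gaussNorm a r} (kf r))
    (hK : ∀ r : ℝ, r1 ≤ r → r ≤ r2 →
      IsGreatest {n : ℤ | ‖a n‖ * r ^ n = gaussNorm a r} (Kf r)) :
    (∀ r R : ℝ, r1 ≤ r → r < R → R ≤ r2 →
      kf r ≤ Kf r ∧ Kf r ≤ kf R ∧ kf R ≤ Kf R) ∧
    MonotoneOn Kf (Set.Icc r1 r2) := by
  have least_le_greatest : ∀ r, r1 ≤ r → r ≤ r2 → kf r ≤ Kf r :=
    fun r hr hr2 => (hk r hr hr2).2 (hK r hr hr2).1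
  have greatest_le_least : ∀ r R, r1 ≤ r → r < R → R ≤ r2 → Kf r ≤ kf R :=
    fun r R hr hrR hR2 =>
      le_of_eq_gaussNorm_of_lt (h1.trans_le hr) hrR hne (ha r hr (hrR.le.trans hR2))
        (ha R (hr.trans hrR.le) hR2) (hK r hr (hrR.le.trans hR2)).1
        (hk R (hr.trans hrR.le) hR2).1
  refine ⟨fun r R hr hrR hR2 => ⟨least_le_greatest r hr (hrR.le.trans hR2),
    greatest_le_least r R hr hrR hR2, least_le_greatest R (hr.trans hrR.le) hR2⟩, ?_⟩
  intro r hr R hR hrR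
  rcases hrR.eq_or_lt with rfl | hlt
  · rfl
  · exact (greatest_le_least r R hr.1 hlt hR.2).trans (least_le_greatest R hR.1 hR.2)

/-- For a nonzero analytic function `f` on `A[r1,r2]` (`0 < r1 ≤ r2 < ∞`), with
`k_f(r) = min{n : |a_n| r^n = |f|_r}` and `K_f(r) = max{n : |a_n| r^n = |f|_r}`, one has
`k_f(r) ≤ K_f(r) ≤ k_f(R) ≤ K_f(R)` for all `r1 ≤ r < R ≤ r2`; in particular `t ↦ K_f(t)` is
nondecreasing on `[r1,r2]`. -/
theorem statement6 {F : Type*} [NontriviallyNormedField F] [IsUltrametricDist F]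
    [CompleteSpace F] (r1 r2 : ℝ) (h1 : 0 < r1) (h12 : r1 ≤ r2)
    (a : ℤ → F) (ha : IsLaurentOn a r1 r2) (hne : ∃ n : ℤ, a n ≠ 0)
    (kf Kf : ℝ → ℤ)
    (hk : ∀ r : ℝ, r1 ≤ r → r ≤ r2 →
      IsLeast {n : ℤ | ‖a n‖ * r ^ n = gaussNorm a r} (kf r))
    (hK : ∀ r : ℝ, r1 ≤ r → r ≤ r2 →
      IsGreatest {n : ℤ | ‖a n‖ * r ^ n = gaussNorm a r} (Kf r)) :
    (∀ r R : ℝ, r1 ≤ r → r < R → R ≤ r2 →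
      kf r ≤ Kf r ∧ Kf r ≤ kf R ∧ kf R ≤ Kf R) ∧
    MonotoneOn Kf (Set.Icc r1 r2) :=
  statement6_general r1 r2 h1 a ha hne kf Kf hk hK
end

section
/- (Hadamard three-circle property: log-convexity of r ↦ |f|_r in log r.) Let 0 < r1 ≤ r2 < ∞ and let f be an analytic function on A[r1,r2]. Then for all s, t, u with r1 ≤ s ≤ t ≤ u ≤ r2 and t = s^{1−θ} u^{θ} for some θ ∈ [0,1], one has |f|_t ≤ |f|_s^{1−θ} · |f|_u^{θ}. -/
open Filter Set

/-! For `t = s^(1-θ) u^θ`, every term `‖a n‖ t^n` of the Gauss norm is the weighted geometric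
mean `(‖a n‖ s^n)^(1-θ) (‖a n‖ u^n)^θ`, and its two factors are bounded by `|f|_s` and `|f|_u`;
taking the supremum over `n` gives the inequality. -/

lemma mul_rpow_mul_rpow_zpow {c s u : ℝ} (hc : 0 ≤ c) (hs : 0 ≤ s) (hu : 0 ≤ u) (θ : ℝ)
    (n : ℤ) : c * (s ^ (1 - θ) * u ^ θ) ^ n = (c * s ^ n) ^ (1 - θ) * (c * u ^ n) ^ θ := by
  have hc_split : c ^ (1 - θ) * c ^ θ = c := by
    rw [← Real.rpow_add' hc (by norm_num), sub_add_cancel, Real.rpow_one]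
  rw [Real.mul_rpow hc (zpow_nonneg hs n), Real.mul_rpow hc (zpow_nonneg hu n),
    ← Real.rpow_zpow_comm hs, ← Real.rpow_zpow_comm hu, mul_zpow]
  linear_combination (-((s ^ (1 - θ)) ^ n * (u ^ θ) ^ n)) * hc_split

section GaussNorm

variable {F : Type*} [NontriviallyNormedField F] {a : ℤ → F}

lemma IsLaurentOn.bddAbove {r1 r2 r : ℝ} (ha : IsLaurentOn a r1 r2) (h1 : r1 ≤ r) (h2 : r ≤ r2) :
    BddAbove (range fun n : ℤ => ‖a n‖ * r ^ n) :=
  (ha r h1 h2).bddAbove_range_of_cofinite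

lemma le_gaussNorm {r : ℝ} (h : BddAbove (range fun n : ℤ => ‖a n‖ * r ^ n)) (n : ℤ) :
    ‖a n‖ * r ^ n ≤ gaussNorm a r :=
  le_csSup h (mem_range_self n)

lemma gaussNorm_nonneg (a : ℤ → F) {r : ℝ} (hr : 0 ≤ r) : 0 ≤ gaussNorm a r :=
  Real.sSup_nonneg (by rintro _ ⟨n, rfl⟩; positivity)

lemma gaussNorm_le {r c : ℝ} (hc : 0 ≤ c) (h : ∀ n, ‖a n‖ * r ^ n ≤ c) : gaussNorm a r ≤ c :=
  Real.sSup_le (by rintro _ ⟨n, rfl⟩; exact h n) hc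

theorem gaussNorm_rpow_mul_rpow_le {s u θ : ℝ} (hs : 0 ≤ s) (hu : 0 ≤ u) (hθ0 : 0 ≤ θ)
    (hθ1 : θ ≤ 1) (hbs : BddAbove (range fun n : ℤ => ‖a n‖ * s ^ n))
    (hbu : BddAbove (range fun n : ℤ => ‖a n‖ * u ^ n)) :
    gaussNorm a (s ^ (1 - θ) * u ^ θ) ≤ gaussNorm a s ^ (1 - θ) * gaussNorm a u ^ θ := by
  have hs' := gaussNorm_nonneg a hs
  have hu' := gaussNorm_nonneg a hu
  refine gaussNorm_le (by positivity) fun n => ?_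
  rw [mul_rpow_mul_rpow_zpow (norm_nonneg _) hs hu]
  have hθ1' : 0 ≤ 1 - θ := sub_nonneg.2 hθ1
  gcongr
  exacts [le_gaussNorm hbs n, le_gaussNorm hbu n]

end GaussNorm

theorem statement8_general {F : Type*} [NontriviallyNormedField F]
    (r1 r2 : ℝ) (h1 : 0 < r1)
    (a : ℤ → F) (ha : IsLaurentOn a r1 r2)
    (s t u θ : ℝ) (hs : r1 ≤ s) (hst : s ≤ t) (htu : t ≤ u) (hu : u ≤ r2)
    (hθ0 : 0 ≤ θ) (hθ1 : θ ≤ 1) (ht : t = s ^ (1 - θ) * u ^ θ) :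
    gaussNorm a t ≤ gaussNorm a s ^ (1 - θ) * gaussNorm a u ^ θ := by
  subst ht
  exact gaussNorm_rpow_mul_rpow_le (by linarith) (by linarith) hθ0 hθ1
    (ha.bddAbove hs (by linarith)) (ha.bddAbove (by linarith) hu)

/-- Hadamard three-circle property (log-convexity of `r ↦ |f|_r` in `log r`): for `f` analytic
on `A[r1,r2]` (`0 < r1 ≤ r2 < ∞`) and `r1 ≤ s ≤ t ≤ u ≤ r2` with `t = s^{1-θ} u^θ`,
`θ ∈ [0,1]`, one has `|f|_t ≤ |f|_s^{1-θ} · |f|_u^θ` (real powers). -/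
theorem statement8 {F : Type*} [NontriviallyNormedField F] [IsUltrametricDist F]
    [CompleteSpace F] (r1 r2 : ℝ) (h1 : 0 < r1) (h12 : r1 ≤ r2)
    (a : ℤ → F) (ha : IsLaurentOn a r1 r2)
    (s t u θ : ℝ) (hs : r1 ≤ s) (hst : s ≤ t) (htu : t ≤ u) (hu : u ≤ r2)
    (hθ0 : 0 ≤ θ) (hθ1 : θ ≤ 1) (ht : t = s ^ (1 - θ) * u ^ θ) :
    gaussNorm a t ≤ gaussNorm a s ^ (1 - θ) * gaussNorm a u ^ θ :=
  statement8_general r1 r2 h1 a ha s t u θ hs hst htu hu hθ0 hθ1 ht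
end
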